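/- Let α₂, α₃, K > 0. Suppose q : ℝ → ℝ is twice continuously differentiable with q' bounded on [0,∞), and satisfies for all t ≥ 0: (α₂ + α₃ cos(q t)) · q''(t) − α₃ · (q'(t))² · sin(q t) = 0 and α₂ · q''(t) + K · q(t) = 0. Then q(t) = 0 for all t ≥ 0. -/

import Mathlib

/-!
Integrating the first equation once, `(α₂ + α₃ cos q) q'` is a constant `λ`; integrating again,
`α₂ q + α₃ sin q = λ t + const`. The second equation conserves the energy `α₂ q'² + K q²`, so `q`
is bounded and hence `λ = 0`. Combining `(α₂ + α₃ cos q) q' = 0` with the first equation gives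
`q' sin q = 0`. Where `q' ≠ 0`, `sin q` vanishes on a neighbourhood, so its derivative
`cos q · q'` vanishes too, which is impossible since `sin` and `cos` have no common zero.
Thus `q' ≡ 0`, so `q'' ≡ 0` and the second equation forces `q ≡ 0`.
-/

open Real Set Filter Topology

theorem eq_add_mul_sub_of_hasDerivAt {f : ℝ → ℝ} {a c : ℝ} (hf : ContinuousOn f (Ici a))
    (hd : ∀ x > a, HasDerivAt f c x) : ∀ x ≥ a, f x = f a + c * (x - a) := by
  intro x hx
  rcases hx.eq_or_lt with rfl | hax
  · simp
  obtain ⟨-, -, hslope⟩ := exists_hasDerivAt_eq_slope f (fun _ ↦ c) hax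
    (hf.mono Icc_subset_Ici_self) fun y hy ↦ hd y hy.1
  rw [eq_div_iff (sub_ne_zero.2 hax.ne')] at hslope
  linarith

theorem eq_zero_of_forall_abs_mul_le {c B : ℝ} (h : ∀ t ≥ 0, |c * t| ≤ B) : c = 0 := by
  by_contra hc
  have hpos : 0 < |c| := abs_pos.2 hc
  have hval : |c * ((|B| + 1) / |c|)| = |B| + 1 := by
    rw [abs_mul, abs_of_nonneg (by positivity : 0 ≤ (|B| + 1) / |c|), mul_div_cancel₀ _ hpos.ne']
  linarith [h ((|B| + 1) / |c|) (by positivity), le_abs_self B]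

theorem eqOn_zero_of_mul_sin_eq_zero {U : Set ℝ} (hU : IsOpen U) {q q' : ℝ → ℝ}
    (hq : ∀ t ∈ U, HasDerivAt q (q' t) t) (hq' : ContinuousOn q' U)
    (h : ∀ t ∈ U, q' t * sin (q t) = 0) : EqOn q' 0 U := by
  intro s hs
  by_contra hne
  have hsin : (fun t ↦ sin (q t)) =ᶠ[𝓝 s] fun _ ↦ 0 := by
    filter_upwards [hU.mem_nhds hs, (hq'.continuousAt (hU.mem_nhds hs)).eventually_ne hne]
      with t htU htne using (mul_eq_zero.1 (h t htU)).resolve_left htne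
  have hcos : cos (q s) * q' s = 0 :=
    ((hasDerivAt_sin (q s)).comp s (hq s hs)).unique
      ((hasDerivAt_const s 0).congr_of_eventuallyEq hsin)
  have hpyth := sin_sq_add_cos_sq (q s)
  rw [hsin.eq_of_nhds, (mul_eq_zero.1 hcos).resolve_right hne] at hpyth
  norm_num at hpyth

section FlexibleJoint

variable {α₂ α₃ K : ℝ} {q q' q'' : ℝ → ℝ}

theorem energy_eq (hq : ∀ t, HasDerivAt q (q' t) t) (hq' : ∀ t, HasDerivAt q' (q'' t) t)
    (h2 : ∀ t > 0, α₂ * q'' t + K * q t = 0) :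
    ∀ t ≥ 0, α₂ * q' t ^ 2 + K * q t ^ 2 = α₂ * q' 0 ^ 2 + K * q 0 ^ 2 := by
  have hE : ∀ t, HasDerivAt (fun t ↦ α₂ * q' t ^ 2 + K * q t ^ 2)
      (α₂ * (2 * q' t ^ 1 * q'' t) + K * (2 * q t ^ 1 * q' t)) t := fun t ↦
    (((hq' t).pow 2).const_mul α₂).add (((hq t).pow 2).const_mul K)
  intro t ht
  simpa using eq_add_mul_sub_of_hasDerivAt (c := 0)
    (fun x _ ↦ (hE x).continuousAt.continuousWithinAt)
    (fun x hx ↦ (hE x).congr_deriv (by linear_combination 2 * q' x * h2 x hx)) t ht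

theorem abs_le_sqrt_energy (hα₂ : 0 ≤ α₂) (hK : 0 < K) (hq : ∀ t, HasDerivAt q (q' t) t)
    (hq' : ∀ t, HasDerivAt q' (q'' t) t) (h2 : ∀ t > 0, α₂ * q'' t + K * q t = 0) :
    ∀ t ≥ 0, |q t| ≤ √((α₂ * q' 0 ^ 2 + K * q 0 ^ 2) / K) := by
  intro t ht
  refine abs_le_sqrt ((le_div_iff₀ hK).2 ?_)
  nlinarith [energy_eq hq hq' h2 t ht, mul_nonneg hα₂ (sq_nonneg (q' t))]

theorem momentum_eq (hq : ∀ t, HasDerivAt q (q' t) t) (hq' : ∀ t, HasDerivAt q' (q'' t) t)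
    (h1 : ∀ t > 0, (α₂ + α₃ * cos (q t)) * q'' t - α₃ * q' t ^ 2 * sin (q t) = 0) :
    ∀ t ≥ 0, (α₂ + α₃ * cos (q t)) * q' t = (α₂ + α₃ * cos (q 0)) * q' 0 := by
  have hP : ∀ t, HasDerivAt (fun t ↦ (α₂ + α₃ * cos (q t)) * q' t)
      (α₃ * (-sin (q t) * q' t) * q' t + (α₂ + α₃ * cos (q t)) * q'' t) t := fun t ↦
    (((hasDerivAt_cos (q t)).comp t (hq t)).const_mul α₃ |>.const_add α₂).mul (hq' t)
  intro t ht
  simpa using eq_add_mul_sub_of_hasDerivAt (c := 0)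
    (fun x _ ↦ (hP x).continuousAt.continuousWithinAt)
    (fun x hx ↦ (hP x).congr_deriv (by linear_combination h1 x hx)) t ht

theorem momentum_eq_zero {M : ℝ} (hq : ∀ t, HasDerivAt q (q' t) t)
    (hq' : ∀ t, HasDerivAt q' (q'' t) t)
    (h1 : ∀ t > 0, (α₂ + α₃ * cos (q t)) * q'' t - α₃ * q' t ^ 2 * sin (q t) = 0)
    (hM : ∀ t ≥ 0, |q t| ≤ M) : ∀ t ≥ 0, (α₂ + α₃ * cos (q t)) * q' t = 0 := by
  set lam := (α₂ + α₃ * cos (q 0)) * q' 0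
  have hmom := momentum_eq hq hq' h1
  have hG : ∀ t, HasDerivAt (fun t ↦ α₂ * q t + α₃ * sin (q t))
      (α₂ * q' t + α₃ * (cos (q t) * q' t)) t := fun t ↦
    ((hq t).const_mul α₂).add (((hasDerivAt_sin (q t)).comp t (hq t)).const_mul α₃)
  have hG_lin := eq_add_mul_sub_of_hasDerivAt (c := lam)
    (fun x _ ↦ (hG x).continuousAt.continuousWithinAt)
    (fun x hx ↦ (hG x).congr_deriv (by linear_combination hmom x hx.le))
  have hG_bdd : ∀ t ≥ 0, |α₂ * q t + α₃ * sin (q t)| ≤ |α₂| * M + |α₃| := fun t ht ↦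
    calc |α₂ * q t + α₃ * sin (q t)| ≤ |α₂| * |q t| + |α₃| * |sin (q t)| := by
          simpa only [abs_mul] using abs_add_le (α₂ * q t) (α₃ * sin (q t))
      _ ≤ |α₂| * M + |α₃| * 1 := by gcongr; exacts [hM t ht, abs_sin_le_one _]
      _ = |α₂| * M + |α₃| := by ring
  have hlam : lam = 0 := eq_zero_of_forall_abs_mul_le fun t ht ↦
    calc |lam * t| = |(α₂ * q t + α₃ * sin (q t)) - (α₂ * q 0 + α₃ * sin (q 0))| := by
          rw [hG_lin t ht, sub_zero]; ring_nf
      _ ≤ 2 * (|α₂| * M + |α₃|) := by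
          linarith [abs_sub _ _ |>.trans (add_le_add (hG_bdd t ht) (hG_bdd 0 le_rfl))]
  exact fun t ht ↦ (hmom t ht).trans hlam

theorem deriv_mul_sin_eq_zero (hα₃ : α₃ ≠ 0)
    (h1 : ∀ t > 0, (α₂ + α₃ * cos (q t)) * q'' t - α₃ * q' t ^ 2 * sin (q t) = 0)
    (hmom : ∀ t > 0, (α₂ + α₃ * cos (q t)) * q' t = 0) : ∀ t > 0, q' t * sin (q t) = 0 := by
  intro t ht
  have hcube : α₃ * (q' t ^ 3 * sin (q t)) = 0 := by
    linear_combination q'' t * hmom t ht - q' t * h1 t ht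
  simp only [mul_eq_zero, hα₃, false_or, pow_eq_zero_iff three_ne_zero] at hcube ⊢
  exact hcube

end FlexibleJoint

theorem stmt_1_general (α₂ α₃ K : ℝ) (hα₂ : 0 < α₂) (hα₃ : 0 < α₃) (hK : 0 < K)
    (q : ℝ → ℝ) (hq : ContDiff ℝ 2 q)
    (h1 : ∀ t ≥ (0 : ℝ),
      (α₂ + α₃ * Real.cos (q t)) * deriv (deriv q) t
        - α₃ * (deriv q t) ^ 2 * Real.sin (q t) = 0)
    (h2 : ∀ t ≥ (0 : ℝ), α₂ * deriv (deriv q) t + K * q t = 0) :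
    ∀ t ≥ (0 : ℝ), q t = 0 := by
  obtain ⟨hq_diff, -, hq'_C1⟩ := contDiff_succ_iff_deriv.mp (show ContDiff ℝ (1 + 1) q from hq)
  have hq1 : ∀ t, HasDerivAt q (deriv q t) t := fun t ↦ (hq_diff t).hasDerivAt
  have hq2 : ∀ t, HasDerivAt (deriv q) (deriv (deriv q) t) t := fun t ↦
    (hq'_C1.differentiable one_ne_zero t).hasDerivAt
  have h1' : ∀ t > (0 : ℝ), _ := fun t ht ↦ h1 t ht.le
  have h2' : ∀ t > (0 : ℝ), _ := fun t ht ↦ h2 t ht.le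
  have hmom := momentum_eq_zero hq1 hq2 h1' (abs_le_sqrt_energy hα₂.le hK hq1 hq2 h2')
  have hq'_zero : ∀ t > 0, deriv q t = 0 :=
    eqOn_zero_of_mul_sin_eq_zero isOpen_Ioi (fun t _ ↦ hq1 t) hq'_C1.continuous.continuousOn
      (deriv_mul_sin_eq_zero hα₃.ne' h1' fun t ht ↦ hmom t ht.le)
  have hq_pos : EqOn q 0 (Ioi 0) := fun t ht ↦ by
    have hq'' : deriv (deriv q) t = 0 := by
      have hq'_loc : deriv q =ᶠ[𝓝 t] fun _ ↦ 0 := eventually_of_mem (Ioi_mem_nhds ht) hq'_zero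
      rw [hq'_loc.deriv_eq, deriv_const]
    simpa [hq'', hK.ne'] using h2' t ht
  exact fun t ht ↦ hq_pos.of_subset_closure hq_diff.continuous.continuousOn continuousOn_const
    Ioi_subset_Ici_self (closure_Ioi (0 : ℝ)).ge ht

theorem stmt_1 (α₂ α₃ K : ℝ) (hα₂ : 0 < α₂) (hα₃ : 0 < α₃) (hK : 0 < K)
    (q : ℝ → ℝ) (hq : ContDiff ℝ 2 q)
    (C : ℝ) (hbdd : ∀ t ≥ (0 : ℝ), |deriv q t| ≤ C)
    (h1 : ∀ t ≥ (0 : ℝ),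
      (α₂ + α₃ * Real.cos (q t)) * deriv (deriv q) t
        - α₃ * (deriv q t) ^ 2 * Real.sin (q t) = 0)
    (h2 : ∀ t ≥ (0 : ℝ), α₂ * deriv (deriv q) t + K * q t = 0) :
    ∀ t ≥ (0 : ℝ), q t = 0 :=
  stmt_1_general α₂ α₃ K hα₂ hα₃ hK q hq h1 h2
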